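/- arXiv:1503.00446 — 2 statements merged into one kernel-verified Lean document; each statement's English description precedes it below -/
import Mathlib

section
/- There exists a resolvable (2K_8, K_3+e)-design: the edge multiset of 2K_8 can be decomposed into kites which can be grouped into 7 parallel classes, each consisting of two vertex-disjoint kites covering all 8 vertices. -/
/-- The multiset of edges of a simple graph on `Fin m`. -/
noncomputable def edgeMultiset {m : ℕ} (H : SimpleGraph (Fin m)) : Multiset (Sym2 (Fin m)) :=
  (Set.toFinite H.edgeSet).toFinset.val

/-- The number of edges of a simple graph on `Fin m`. -/
noncomputable def edgeCount {m : ℕ} (H : SimpleGraph (Fin m)) : ℕ := (edgeMultiset H).card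

/-- The multiset of edges of the copy of `G` given by the embedding `f`. -/
noncomputable def blockEdges {n v : ℕ} (G : SimpleGraph (Fin n)) (f : Fin n ↪ Fin v) :
    Multiset (Sym2 (Fin v)) :=
  (edgeMultiset G).map (Sym2.map ⇑f)

/-- `classes` is a resolvable decomposition of the multigraph `lam • H` into copies
of `G`: each parallel class covers every vertex exactly once, and the edges of all
blocks, counted with multiplicity, are exactly the edges of `H` taken `lam` times. -/
def IsResolvableDecomp {n v : ℕ} (lam : ℕ) (G : SimpleGraph (Fin n))
    (H : SimpleGraph (Fin v))
    (classes : Multiset (Multiset (Fin n ↪ Fin v))) : Prop :=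
  (∀ P ∈ classes, P.bind (fun f => Multiset.map ⇑f Finset.univ.val) =
      (Finset.univ : Finset (Fin v)).val) ∧
  (classes.bind id).bind (fun f => blockEdges G f) = lam • edgeMultiset H

/-- A resolvable `(λ K_v, G)`-design. -/
def IsResolvableDesign {n : ℕ} (lam v : ℕ) (G : SimpleGraph (Fin n))
    (classes : Multiset (Multiset (Fin n ↪ Fin v))) : Prop :=
  IsResolvableDecomp lam G (⊤ : SimpleGraph (Fin v)) classes

/-- The 4-cycle `C₄`. -/
def cycle4 : SimpleGraph (Fin 4) :=
  SimpleGraph.fromRel (fun a b => (a.val, b.val) ∈ [(0,1),(1,2),(2,3),(3,0)])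

/-- The kite `K₃ + e` (triangle `0,1,2` with pendant edge `{2,3}`). -/
def kite : SimpleGraph (Fin 4) :=
  SimpleGraph.fromRel (fun a b => (a.val, b.val) ∈ [(0,1),(0,2),(1,2),(2,3)])

/-- The 3-star `K_{1,3}` with center `0`. -/
def star3 : SimpleGraph (Fin 4) :=
  SimpleGraph.fromRel (fun a b => (a.val, b.val) ∈ [(0,1),(0,2),(0,3)])

/-- The graph `K₄ - e` (missing the edge `{2,3}`). -/
def k4e : SimpleGraph (Fin 4) :=
  SimpleGraph.fromRel (fun a b => (a.val, b.val) ∈ [(0,1),(0,2),(1,2),(0,3),(1,3)])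

/-!
In `Fin 8`, vertex `7` plays the role of `∞` and `x < 7` that of the residue `x ∈ ℤ/7`.
The base kites `(∞,1,5−6)` and `(0,4,2−3)` are
disjoint and cover all eight points, hence so does each of their seven translates. Their eight edges consist of two edges at `∞` and, in `ℤ/7`, each difference
`±1` (`{5,6}`, `{2,3}`), `±2` (`{0,2}`, `{2,4}`) and `±3` (`{1,5}`, `{0,4}`) exactly twice;
developing them under `ℤ/7` therefore covers every pair of vertices exactly twice.
-/

instance instDecidableRelKiteAdj : DecidableRel kite.Adj := fun a b =>
  decidable_of_iff _ (SimpleGraph.fromRel_adj _ a b).symm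

lemma edgeMultiset_eq_edgeFinset_val {m : ℕ} (H : SimpleGraph (Fin m)) [Fintype H.edgeSet] :
    edgeMultiset H = H.edgeFinset.val := by
  unfold edgeMultiset
  rw [Set.Finite.toFinset_eq_toFinset]
  rfl

/-- Translation by `i` on `ℤ/n ∪ {∞}`, with `∞` encoded as `Fin.last n`. -/
def rotate {n : ℕ} [NeZero n] (i : Fin n) : Equiv.Perm (Fin (n + 1)) :=
  finSuccEquivLast.symm.permCongr (Equiv.optionCongr (Equiv.addRight i))

def kiteAtInfinity : Fin 4 ↪ Fin 8 := ⟨![7, 1, 5, 6], by decide⟩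

def kiteFinite : Fin 4 ↪ Fin 8 := ⟨![0, 4, 2, 3], by decide⟩

def rotatedClass (i : Fin 7) : Multiset (Fin 4 ↪ Fin 8) :=
  {kiteAtInfinity.trans (rotate i).toEmbedding, kiteFinite.trans (rotate i).toEmbedding}

def kiteClasses : Multiset (Multiset (Fin 4 ↪ Fin 8)) :=
  (Finset.univ : Finset (Fin 7)).val.map rotatedClass

lemma rotatedClass_covers (i : Fin 7) :
    (rotatedClass i).bind (fun f => Multiset.map ⇑f Finset.univ.val) =
      (Finset.univ : Finset (Fin 8)).val := by
  revert i
  decide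

lemma kiteClasses_edges :
    (kiteClasses.bind id).bind (blockEdges kite) = 2 • edgeMultiset (⊤ : SimpleGraph (Fin 8)) := by
  unfold blockEdges
  simp only [edgeMultiset_eq_edgeFinset_val]
  decide

theorem stmt7 :
    ∃ classes : Multiset (Multiset (Fin 4 ↪ Fin 8)),
      IsResolvableDesign 2 8 kite classes ∧
      Multiset.card classes = 7 ∧
      ∀ P ∈ classes, Multiset.card P = 2 := by
  refine ⟨kiteClasses, ⟨?_, kiteClasses_edges⟩, rfl, ?_⟩
  all_goals
    intro P hP
    obtain ⟨i, -, rfl⟩ := Multiset.mem_map.mp hP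
  · exact rotatedClass_covers i
  · rfl
end

section
/- There exists a resolvable K_{1,3}-group divisible design of type 4^2 and index 6: the multigraph on 8 vertices consisting of two groups of size 4 with 6 edges between every pair of vertices in different groups (and no edges within groups) can be decomposed into 3-stars grouped into 16 parallel classes of two vertex-disjoint stars each. -/
/-- The complete bipartite host graph of group type `4²`: two groups of size 4,
adjacency exactly between different groups. -/
def host42 : SimpleGraph (Fin 8) :=
  SimpleGraph.fromRel (fun a b => a.val / 4 ≠ b.val / 4)

lemma edgeMultiset_eq_of_nodup {m : ℕ} {H : SimpleGraph (Fin m)} {s : Multiset (Sym2 (Fin m))}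
    (hs : s.Nodup) (h : ∀ e, e ∈ s ↔ e ∈ H.edgeSet) : edgeMultiset H = s :=
  (Multiset.Nodup.ext (Finset.nodup _) hs).mpr fun e => by
    rw [Finset.mem_val, Set.Finite.mem_toFinset, h]

lemma edgeMultiset_star3 :
    edgeMultiset star3 = {s((0 : Fin 4), 1), s((0 : Fin 4), 2), s((0 : Fin 4), 3)} :=
  edgeMultiset_eq_of_nodup (by decide) fun e => by
    induction e using Sym2.ind with
    | _ a b =>
      simp only [SimpleGraph.mem_edgeSet, star3, SimpleGraph.fromRel_adj]
      revert a b; decide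

/-- `vx i` and `vy i` are the paper's `x_{i+1}` and `y_{i+1}`; the groups of `host42` are
`{0, …, 3}` and `{4, …, 7}`. -/
def vx (i : Fin 4) : Fin 8 := Fin.castAdd 4 i

def vy (i : Fin 4) : Fin 8 := Fin.natAdd 4 i

lemma edgeMultiset_host42 :
    edgeMultiset host42 = (Finset.univ : Finset (Fin 4 × Fin 4)).val.map
      (fun p => s(vx p.1, vy p.2)) :=
  edgeMultiset_eq_of_nodup (by decide) fun e => by
    induction e using Sym2.ind with
    | _ a b =>
      simp only [SimpleGraph.mem_edgeSet, host42, SimpleGraph.fromRel_adj]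
      revert a b; decide

/-- The copy `(c; a, b, d)` of `K_{1,3}` with center `c`. -/
def starEmb (c a b d : Fin 8) (h : Function.Injective ![c, a, b, d]) : Fin 4 ↪ Fin 8 :=
  ⟨![c, a, b, d], h⟩

lemma blockEdges_starEmb (c a b d : Fin 8) (h : Function.Injective ![c, a, b, d]) :
    blockEdges star3 (starEmb c a b d h) = {s(c, a), s(c, b), s(c, d)} := by
  simp only [blockEdges, edgeMultiset_star3, Multiset.insert_eq_cons, Multiset.map_cons,
    Multiset.map_singleton, Sym2.map_mk]
  rfl

lemma vx_vy_star_injective (j t : Fin 4) :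
    Function.Injective ![vx t, vy (t + j), vy (t + j + 1), vy (t + j + 2)] := by
  revert j t; decide

lemma vy_vx_star_injective (j t : Fin 4) :
    Function.Injective ![vy (t + j + 3), vx (t + 1), vx (t + 2), vx (t + 3)] := by
  revert j t; decide

/-- The translate by `t` of the `j`-th base class
`{(x₀; y_j, y_{j+1}, y_{j+2}), (y_{j+3}; x₁, x₂, x₃)}`, subscripts taken mod 4. -/
def developedClass (j t : Fin 4) : Multiset (Fin 4 ↪ Fin 8) :=
  {starEmb (vx t) (vy (t + j)) (vy (t + j + 1)) (vy (t + j + 2)) (vx_vy_star_injective j t),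
   starEmb (vy (t + j + 3)) (vx (t + 1)) (vx (t + 2)) (vx (t + 3)) (vy_vx_star_injective j t)}

def starClasses : Multiset (Multiset (Fin 4 ↪ Fin 8)) :=
  (Finset.univ : Finset (Fin 4 × Fin 4)).val.map fun p => developedClass p.1 p.2

lemma developedClass_covers (j t : Fin 4) :
    (developedClass j t).bind (fun f => Multiset.map ⇑f Finset.univ.val) =
      (Finset.univ : Finset (Fin 8)).val := by
  revert j t; decide

lemma developedClass_edges (j t : Fin 4) :
    (developedClass j t).bind (blockEdges star3) =
      {s(vx t, vy (t + j)), s(vx t, vy (t + j + 1)), s(vx t, vy (t + j + 2)),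
       s(vy (t + j + 3), vx (t + 1)), s(vy (t + j + 3), vx (t + 2)),
       s(vy (t + j + 3), vx (t + 3))} := by
  simp only [developedClass, Multiset.insert_eq_cons, Multiset.cons_bind, Multiset.singleton_bind,
    blockEdges_starEmb]
  rfl

lemma forall_mem_starClasses {p : Multiset (Fin 4 ↪ Fin 8) → Prop} :
    (∀ P ∈ starClasses, p P) ↔ ∀ j t, p (developedClass j t) := by
  simp only [starClasses, Multiset.forall_mem_map_iff, Finset.mem_val, Finset.mem_univ,
    true_implies, Prod.forall]

/- The pair `{x_a, y_b}` lies in the `x`-centred star of class `(j, t)` iff `t = a` and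
`b - a ∈ {j, j+1, j+2}` (three values of `j`), and in the `y`-centred one iff `t ≠ a` and
`j = b - t - 3` (three values of `t`). -/
lemma starClasses_edges :
    (starClasses.bind id).bind (fun f => blockEdges star3 f) = 6 • edgeMultiset host42 := by
  simp only [starClasses, Multiset.bind_map, id, Multiset.bind_assoc,
    developedClass_edges, edgeMultiset_host42]
  decide

theorem stmt12 :
    ∃ classes : Multiset (Multiset (Fin 4 ↪ Fin 8)),
      IsResolvableDecomp 6 star3 host42 classes ∧
      Multiset.card classes = 16 ∧
      ∀ P ∈ classes, Multiset.card P = 2 := by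
  refine ⟨starClasses, ⟨?_, starClasses_edges⟩, by simp [starClasses], ?_⟩
  · exact forall_mem_starClasses.mpr developedClass_covers
  · exact forall_mem_starClasses.mpr fun _ _ => rfl
end
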